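/- arXiv:2503.03058 — 3 statements merged into one kernel-verified Lean document; each statement's English description precedes it below -/
import Mathlib

section
/- If G is a group and S_1, ..., S_n are finitely many subgroups such that the union of finitely many left cosets S = g_1 S_1 ∪ ... ∪ g_n S_n is left thick, i.e., for every finite set F ⊆ G there exists x ∈ G with Fx ⊆ S, then one of the subgroups S_i has finite index in G. -/
open scoped Pointwise

/-- A strengthening of B.H. Neumann's lemma: if a union of finitely many left
cosets `g i • S i` of subgroups `S i` of `G` is left thick (for every finite set
`F ⊆ G` there is `x ∈ G` with `F * x` contained in the union), then one of the
subgroups `S i` has finite index in `G`. -/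
theorem leftThick_union_cosets_finiteIndex {G : Type*} [Group G] {n : ℕ}
    (S : Fin n → Subgroup G) (g : Fin n → G)
    (hthick : ∀ F : Finset G, ∃ x : G, ∀ f ∈ F, f * x ∈ ⋃ i, (g i) • (S i : Set G)) :
    ∃ i, (S i).FiniteIndex := by
  classical
  choose x hx using hthick
  set U : Ultrafilter (Finset G) := Ultrafilter.of Filter.atTop with hUdef
  have hU : (U : Filter (Finset G)) ≤ Filter.atTop := Ultrafilter.of_le _
  -- For each f, pick an index i such that f * x F lies in the i-th coset U-often.
  have key : ∀ f : G, ∃ i : Fin n,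
      {F : Finset G | f * x F ∈ (g i) • (S i : Set G)} ∈ U := by
    intro f
    have h1 : {F : Finset G | f ∈ F} ∈ U := by
      refine hU ?_
      have : {F : Finset G | {f} ≤ F} ∈ (Filter.atTop : Filter (Finset G)) :=
        Filter.mem_atTop ({f} : Finset G)
      refine Filter.mem_of_superset this ?_
      intro F hF
      exact hF (Finset.mem_singleton_self f)
    have h2 : {F : Finset G | f ∈ F} ⊆
        ⋃ i ∈ (Set.univ : Set (Fin n)), {F : Finset G | f * x F ∈ (g i) • (S i : Set G)} := by
      intro F hF
      obtain ⟨i, hi⟩ := Set.mem_iUnion.mp (hx F f hF)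
      exact Set.mem_iUnion₂.mpr ⟨i, Set.mem_univ i, hi⟩
    have h3 := Filter.mem_of_superset h1 h2
    obtain ⟨i, _, hi⟩ := (Ultrafilter.finite_biUnion_mem_iff Set.finite_univ).mp h3
    exact ⟨i, hi⟩
  let φ : G → Fin n := fun f => (key f).choose
  have hφ : ∀ f : G, {F : Finset G | f * x F ∈ (g (φ f)) • (S (φ f) : Set G)} ∈ U :=
    fun f => (key f).choose_spec
  -- choose a representative for each used index
  let c : Fin n → G := fun i => if h : ∃ f : G, φ f = i then h.choose else 1
  -- conjugated subgroups
  let H : Fin n → Subgroup G :=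
    fun i => (S i).map (MulAut.conj ((c i)⁻¹ * g i)).toMonoidHom
  have hcover : ⋃ i ∈ (Finset.univ : Finset (Fin n)), (c i) • (H i : Set G) = Set.univ := by
    refine Set.eq_univ_of_forall fun f => ?_
    set i := φ f with hi
    have hex : ∃ f' : G, φ f' = i := ⟨f, rfl⟩
    have hc : c i = hex.choose := by simp only [c, dif_pos hex]
    have hφc : φ (c i) = i := by rw [hc]; exact hex.choose_spec
    -- both f and c i land in the coset g i • S i for a common F
    have hA : {F : Finset G | f * x F ∈ (g i) • (S i : Set G)} ∈ U := hφ f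
    have hB : {F : Finset G | (c i) * x F ∈ (g i) • (S i : Set G)} ∈ U := by
      have := hφ (c i); rwa [hφc] at this
    obtain ⟨F, hFA, hFB⟩ := Filter.nonempty_of_mem (Filter.inter_mem hA hB)
    simp only [Set.mem_setOf_eq] at hFA hFB
    rw [mem_leftCoset_iff] at hFA hFB
    have ht : ((g i)⁻¹ * (f * x F)) * ((g i)⁻¹ * ((c i) * x F))⁻¹ ∈ S i :=
      mul_mem hFA (inv_mem hFB)
    refine Set.mem_biUnion (Finset.mem_univ i) ?_
    rw [mem_leftCoset_iff]
    refine ⟨_, ht, ?_⟩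
    simp only [MulEquiv.toMonoidHom_eq_coe, MonoidHom.coe_coe, MulAut.conj_apply]
    group
  obtain ⟨i, _, hfi⟩ := Subgroup.exists_finiteIndex_of_leftCoset_cover hcover
  refine ⟨i, ⟨?_⟩⟩
  have heq : (H i).index = (S i).index :=
    Subgroup.index_map_eq _ (MulEquiv.surjective _)
      (fun y hy => by
        have h1 : y = 1 := (MulAut.conj ((c i)⁻¹ * g i)).injective (by simpa using hy)
        exact h1 ▸ one_mem (S i))
  rw [← heq]
  exact hfi.index_ne_zero
end

section
/- Let G be a finitely generated group acting on a set X, and let Y, Z be disjoint finite subsets of X. Then the set of elements g ∈ G such that Z ∩ gY = ∅ is left syndetic in G (i.e., finitely many left translates of this set cover G). -/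
/-!
With `W g = g • Y` and `V f = f • Z`, all that matters is that `W g` and `V g` are disjoint and
that the `W g` have a common size `m`: for any two such families of finite sets, finitely many
`V i` suffice for every `W j` to miss one of them. Induct on `m`, fixing some `i₀`. A `W j` that
meets `V i₀` contains one of its finitely many points `v`; on the indices with `v ∈ W j` the
sets `W j \ {v}` have size `m - 1`, and since a `V i` with `v ∈ W i` avoids `v`, missing
`W j \ {v}` is the same as missing `W j`.
-/

open Finset Pointwise

theorem Finset.exists_finset_forall_exists_disjoint {ι α : Type*} (m : ℕ) (W V : ι → Finset α)
    (hW : ∀ i, #(W i) ≤ m) (hWV : ∀ i, Disjoint (W i) (V i)) :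
    ∃ F : Finset ι, ∀ j, ∃ i ∈ F, Disjoint (W j) (V i) := by
  classical
  induction m generalizing ι with
  | zero =>
    rcases isEmpty_or_nonempty ι with hι | ⟨⟨i₀⟩⟩
    · exact ⟨∅, fun j => isEmptyElim j⟩
    · refine ⟨{i₀}, fun j => ⟨i₀, mem_singleton_self _, ?_⟩⟩
      simp [card_eq_zero.mp (Nat.le_zero.mp (hW j))]
  | succ m ih =>
    rcases isEmpty_or_nonempty ι with hι | ⟨⟨i₀⟩⟩
    · exact ⟨∅, fun j => isEmptyElim j⟩
    have hfiber (v : α) : ∃ F : Finset ι, ∀ j, v ∈ W j → ∃ i ∈ F, Disjoint (W j) (V i) := by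
      obtain ⟨F, hF⟩ := ih (ι := {j // v ∈ W j}) (fun j => (W j).erase v) (fun j => V j)
        (fun j => by rw [card_erase_of_mem j.2]; have := hW j; omega)
        (fun j => disjoint_of_subset_left (erase_subset _ _) (hWV j))
      refine ⟨F.map (Function.Embedding.subtype _), fun j hj => ?_⟩
      obtain ⟨i, hiF, hi⟩ := hF ⟨j, hj⟩
      refine ⟨i, mem_map_of_mem _ hiF, ?_⟩
      have hv : v ∉ V i := disjoint_left.mp (hWV i) i.2
      rwa [disjoint_erase_comm, erase_eq_of_notMem hv] at hi
    choose F hF using hfiber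
    refine ⟨insert i₀ ((V i₀).biUnion F), fun j => ?_⟩
    by_cases hj : Disjoint (W j) (V i₀)
    · exact ⟨i₀, mem_insert_self _ _, hj⟩
    obtain ⟨v, hvW, hvV⟩ := not_disjoint_iff.mp hj
    obtain ⟨i, hiF, hi⟩ := hF v j hvW
    exact ⟨i, mem_insert_of_mem (mem_biUnion.mpr ⟨v, hvV, hiF⟩), hi⟩

theorem syndetic_disjoint_translates_general {G X : Type*} [Group G] [MulAction G X]
    (Y Z : Finset X) (hdisj : Disjoint (Y : Set X) (Z : Set X)) :
    ∃ F : Finset G, ∀ g : G, ∃ f ∈ F, ∀ y ∈ Y, (f⁻¹ * g) • y ∉ Z := by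
  classical
  obtain ⟨F, hF⟩ := exists_finset_forall_exists_disjoint #Y (fun g : G => g • Y) (· • Z)
    (fun g => (card_smul_finset g Y).le)
    (fun g => by
      rw [← disjoint_coe, coe_smul_finset, coe_smul_finset]
      exact Set.disjoint_smul_set.mpr hdisj)
  refine ⟨F, fun g => ?_⟩
  obtain ⟨f, hfF, hf⟩ := hF g
  refine ⟨f, hfF, fun y hy hyZ => disjoint_left.mp hf (smul_mem_smul_finset hy) ?_⟩
  rwa [mul_smul, inv_smul_mem_iff] at hyZ

/-- Let `G` be a finitely generated group acting on a set `X`, and let `Y, Z` be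
disjoint finite subsets of `X`. Then the set of `g ∈ G` with `Z ∩ gY = ∅` is
left syndetic: there is a finite set `F ⊆ G` such that every `g ∈ G` can be
written as `f * s` with `f ∈ F` and `s` in that set. -/
theorem syndetic_disjoint_translates {G X : Type*} [Group G] [MulAction G X]
    (hFG : Group.FG G) (Y Z : Finset X) (hdisj : Disjoint (Y : Set X) (Z : Set X)) :
    ∃ F : Finset G, ∀ g : G, ∃ f ∈ F, ∀ y ∈ Y, (f⁻¹ * g) • y ∉ Z :=
  syndetic_disjoint_translates_general Y Z hdisj
end

section
/- Let a subgroup H ≤ Homeo(X) act 2-orbit-transitively on a G-invariant set Y of aperiodic points of a G-subshift X (for any two points y₁, y₂ ∈ Y in distinct shift orbits and any z₁, z₂ ∈ Y in distinct shift orbits with matching trivial stabilizers, some h ∈ H sends yᵢ to zᵢ). Suppose f is a bijection of X commuting with every element of H and with the G-action, and f(Y) ⊆ Y. Then for every y ∈ Y, f(y) lies in the G-shift-orbit of y. [Core step: if f(x) = y with y not in the orbit of x, pick h ∈ H with h(x) = x and h(y) = s·y ≠ y (possible by 2-orbit-transitivity and aperiodicity of y), contradicting that f must preserve the support of h.] 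-/
/-- Suppose a subgroup `H` of the group of bijections of `X` acts
2-orbit-transitively on a `G`-invariant set `Y` of aperiodic points of a
`G`-system `X`: for any `y₁, y₂ ∈ Y` in distinct `G`-orbits and any
`z₁, z₂ ∈ Y` in distinct `G`-orbits (all stabilizers being trivial), some
`h ∈ H` sends `yᵢ` to `zᵢ`. If `f` is a bijection of `X` commuting with every
element of `H` and with the `G`-action, and `f(Y) ⊆ Y`, then every `y ∈ Y` is
mapped by `f` into its `G`-orbit. -/
theorem mem_orbit_of_commutes_of_two_orbit_transitive
    {G X : Type*} [Group G] [Nontrivial G] [MulAction G X]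
    (Y : Set X)
    (hYinv : ∀ (g : G), ∀ y ∈ Y, g • y ∈ Y)
    (hYaper : ∀ y ∈ Y, ∀ g : G, g • y = y → g = 1)
    (H : Subgroup (Equiv.Perm X))
    (hHpres : ∀ h ∈ H, ∀ y ∈ Y, h y ∈ Y)
    (hHtrans : ∀ y₁ y₂ z₁ z₂ : X, y₁ ∈ Y → y₂ ∈ Y → z₁ ∈ Y → z₂ ∈ Y →
      (¬∃ g : G, g • y₁ = y₂) → (¬∃ g : G, g • z₁ = z₂) →
      ∃ h ∈ H, h y₁ = z₁ ∧ h y₂ = z₂)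
    (f : Equiv.Perm X)
    (hfH : ∀ h ∈ H, ∀ x : X, f (h x) = h (f x))
    (hfG : ∀ (g : G) (x : X), f (g • x) = g • f x)
    (hfY : ∀ y ∈ Y, f y ∈ Y) :
    ∀ y ∈ Y, ∃ g : G, f y = g • y := by
  intro y hy
  by_contra hno
  push_neg at hno
  obtain ⟨s, hs⟩ := exists_ne (1 : G)
  have hfyY : f y ∈ Y := hfY y hy
  have hno' : ¬∃ g : G, g • y = f y := by
    rintro ⟨g, hg⟩; exact hno g hg.symm
  have hno2 : ¬∃ g : G, g • y = s • f y := by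
    rintro ⟨g, hg⟩
    exact hno' ⟨s⁻¹ * g, by rw [mul_smul, hg, inv_smul_smul]⟩
  obtain ⟨h, hH, h1, h2⟩ := hHtrans y (f y) y (s • f y) hy hfyY hy
    (hYinv s (f y) hfyY) hno' hno2
  have := hfH h hH y
  rw [h1, h2] at this
  exact hs (hYaper (f y) hfyY s this.symm)
end
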